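/- arXiv:2401.00202 — 2 statements merged into one kernel-verified Lean document; each statement's English description precedes it below -/
import Mathlib

section
/- Let m ≥ 0 and let f be a monic irreducible polynomial over F_{q²} of degree 2m+1 with f(0) ≠ 0. Let ord(f) denote the multiplicative order of the image of X in the unit group of the field F_{q²}[X]/(f) (equivalently, the multiplicative order of any root of f in its splitting field). Then f is ~-symmetric (f̃ = f) if and only if ord(f) ∈ D̃_m. -/
open Matrix Polynomial
open scoped Classical

noncomputable section

/-- `eord q d` : the multiplicative order of `q` in `(ℤ/dℤ)ˣ`. -/
def eord (q d : ℕ) : ℕ := orderOf (q : ZMod d)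

/-- `Dset q m` is the set `D_m`. -/
def Dset (q m : ℕ) : Set ℕ := {x | 0 < x ∧ x ∣ q ^ m + 1 ∧ ∀ t < m, ¬ x ∣ q ^ t + 1}

/-- `DtildeSet q m` is the set `D̃_m`. -/
def DtildeSet (q m : ℕ) : Set ℕ :=
  {y | 0 < y ∧ y ∣ q ^ (2 * m + 1) + 1 ∧ ∀ t, Odd t → t < 2 * m + 1 → ¬ y ∣ q ^ t + 1}

/-- `oo M = 2` if `M` is even, `1` otherwise. -/
def oo (M : ℕ) : ℕ := if Even M then 2 else 1

/-- The power series `1 + Σ_{m ≥ 1} (c m) · z^(e·m)` in `ℚ⟦z⟧`. -/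
def ser (e : ℕ) (c : ℕ → ℚ) : PowerSeries ℚ :=
  PowerSeries.mk fun n => if n = 0 then 1 else if e ∣ n then c (n / e) else 0

/-- The antidiagonal matrix `Π_m`. -/
def antidiagMat (F : Type*) [Field F] (m : ℕ) : Matrix (Fin m) (Fin m) F :=
  Matrix.of fun i j => if (i : ℕ) + (j : ℕ) + 1 = m then 1 else 0

/-- The Gram matrix `[[0, Π],[−Π, 0]]` of the standard symplectic form (for `m = 2n`). -/
def sympForm (F : Type*) [Field F] (m : ℕ) : Matrix (Fin m) (Fin m) F :=
  Matrix.of fun i j =>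
    if (i : ℕ) + (j : ℕ) + 1 = m then (if 2 * (i : ℕ) < m then 1 else -1) else 0

/-- The Gram matrix `J_-` of the minus-type symmetric form in even dimension `m = 2n`. -/
def minusForm {F : Type*} [Field F] (δ : F) (m : ℕ) : Matrix (Fin m) (Fin m) F :=
  Matrix.of fun i j =>
    if (i : ℕ) = j ∧ 2 * (i : ℕ) + 2 = m then 1
    else if (i : ℕ) = j ∧ 2 * (i : ℕ) = m then -δ
    else if (i : ℕ) + (j : ℕ) + 1 = m ∧ 2 * (i : ℕ) + 2 ≠ m ∧ 2 * (i : ℕ) ≠ m then 1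
    else 0

/-- The Gram matrix `J_0` (with middle entry `α`) in odd dimension `m = 2n+1`. -/
def oddForm {F : Type*} [Field F] (α : F) (m : ℕ) : Matrix (Fin m) (Fin m) F :=
  Matrix.of fun i j =>
    if (i : ℕ) = j ∧ 2 * (i : ℕ) + 1 = m then α
    else if (i : ℕ) + (j : ℕ) + 1 = m then 1 else 0

/-- The subgroup `{A ∈ GL_m(F) | ᵗA · J · A = J}`. -/
def formGroup {F : Type*} [Field F] {m : ℕ} (J : Matrix (Fin m) (Fin m) F) :
    Subgroup (GL (Fin m) F) where
  carrier := {A | (A : Matrix (Fin m) (Fin m) F)ᵀ * J * (A : Matrix (Fin m) (Fin m) F) = J}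
  one_mem' := by simp
  mul_mem' := by
    intro a b ha hb
    simp only [Set.mem_setOf_eq, Units.val_mul, Matrix.transpose_mul] at *
    calc (↑b)ᵀ * (↑a)ᵀ * J * ((a : Matrix (Fin m) (Fin m) F) * ↑b)
        = (↑b)ᵀ * ((↑a)ᵀ * J * ↑a) * ↑b := by
          simp only [Matrix.mul_assoc]
      _ = J := by rw [ha]; exact hb
  inv_mem' := by
    intro a ha
    simp only [Set.mem_setOf_eq] at *
    calc ((a⁻¹ : GL (Fin m) F) : Matrix (Fin m) (Fin m) F)ᵀ * J * ↑(a⁻¹)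
        = (↑(a⁻¹) : Matrix (Fin m) (Fin m) F)ᵀ * ((↑a)ᵀ * J * ↑a) * ↑(a⁻¹) := by rw [ha]
      _ = ((a : Matrix (Fin m) (Fin m) F) * ↑(a⁻¹))ᵀ * J *
            ((a : Matrix (Fin m) (Fin m) F) * ↑(a⁻¹)) := by
          rw [Matrix.transpose_mul]
          simp only [Matrix.mul_assoc]
      _ = J := by rw [a.mul_inv]; simp

/-- The subgroup `{A ∈ GL_m(F) | A · J · ᵗ(σ(A)) = J}`, where `σ` acts entrywise. -/
def conjTransGroup {F : Type*} [Field F] (σ : F →+* F) {m : ℕ}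
    (J : Matrix (Fin m) (Fin m) F) : Subgroup (GL (Fin m) F) where
  carrier := {A | (A : Matrix (Fin m) (Fin m) F) * J *
      ((A : Matrix (Fin m) (Fin m) F).map σ)ᵀ = J}
  one_mem' := by simp [Matrix.map_one]
  mul_mem' := by
    intro a b ha hb
    simp only [Set.mem_setOf_eq, Units.val_mul, Matrix.map_mul, Matrix.transpose_mul] at *
    calc (a : Matrix (Fin m) (Fin m) F) * ↑b * J *
          (((b : Matrix (Fin m) (Fin m) F).map σ)ᵀ * ((a : Matrix (Fin m) (Fin m) F).map σ)ᵀ)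
        = (a : Matrix (Fin m) (Fin m) F) *
            ((b : Matrix (Fin m) (Fin m) F) * J * ((b : Matrix (Fin m) (Fin m) F).map σ)ᵀ) *
            ((a : Matrix (Fin m) (Fin m) F).map σ)ᵀ := by
          simp only [Matrix.mul_assoc]
      _ = J := by rw [hb]; exact ha
  inv_mem' := by
    intro a ha
    simp only [Set.mem_setOf_eq] at *
    have h1 : ((a⁻¹ : GL (Fin m) F) : Matrix (Fin m) (Fin m) F) *
        ((a : GL (Fin m) F) : Matrix (Fin m) (Fin m) F) = 1 := a.inv_mul
    have h2 : ((a⁻¹ : GL (Fin m) F) : Matrix (Fin m) (Fin m) F).map σ *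
        ((a : GL (Fin m) F) : Matrix (Fin m) (Fin m) F).map σ = 1 := by
      rw [← Matrix.map_mul, h1]; exact Matrix.map_one _ (map_zero σ) (map_one σ)
    calc ((a⁻¹ : GL (Fin m) F) : Matrix (Fin m) (Fin m) F) * J *
          (((a⁻¹ : GL (Fin m) F) : Matrix (Fin m) (Fin m) F).map σ)ᵀ
        = (↑(a⁻¹) : Matrix (Fin m) (Fin m) F) *
            ((a : Matrix (Fin m) (Fin m) F) * J * ((a : Matrix (Fin m) (Fin m) F).map σ)ᵀ) *
            ((↑(a⁻¹) : Matrix (Fin m) (Fin m) F).map σ)ᵀ := by rw [ha]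
      _ = ((↑(a⁻¹) : Matrix (Fin m) (Fin m) F) * ↑a) * J *
            ((↑(a⁻¹) : Matrix (Fin m) (Fin m) F).map σ *
              ((a : Matrix (Fin m) (Fin m) F)).map σ)ᵀ := by
          rw [Matrix.transpose_mul]
          simp only [Matrix.mul_assoc]
      _ = J := by rw [h1, h2, Matrix.transpose_one, one_mul, mul_one]

/-- The symplectic group `Sp_m(F)` (`m` even) w.r.t. `sympForm`. -/
def SpGrp (F : Type*) [Field F] (m : ℕ) : Subgroup (GL (Fin m) F) := formGroup (sympForm F m)

/-- Orthogonal groups: `OGrp δ true m = O^+_m`, `OGrp δ false m = O^-_m`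
(in odd dimension, `+` uses the Gram matrix `J_0` with `α = 1`, i.e. the antidiagonal,
and `-` uses `α = δ`). -/
def OGrp {F : Type*} [Field F] (δ : F) (ε : Bool) (m : ℕ) : Subgroup (GL (Fin m) F) :=
  if ε then formGroup (antidiagMat F m)
  else if Even m then formGroup (minusForm δ m) else formGroup (oddForm δ m)

/-- The unitary group `U_m((p^a)²)`, living in `GL_m(F_{p^(2a)})`. -/
def UGrp (p a : ℕ) [Fact p.Prime] (m : ℕ) : Subgroup (GL (Fin m) (GaloisField p (2 * a))) :=
  conjTransGroup (iterateFrobenius (GaloisField p (2 * a)) p a)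
    (antidiagMat (GaloisField p (2 * a)) m)

/-- An element of `GL_m(F)` is semisimple iff its minimal polynomial over `F` is squarefree. -/
def IsSSMat {F : Type*} [Field F] {m : ℕ} (x : GL (Fin m) F) : Prop :=
  Squarefree (minpoly F (x : Matrix (Fin m) (Fin m) F))

/-- Fulman's centralizer-order quantity
`c(λ,Q) = Q^(Σᵢ (λ'ᵢ)²) · Π_i Π_{j=1}^{mᵢ(λ)} (1 − Q^(−j))`. -/
def cInd (Q : ℚ) {n : ℕ} (l : Nat.Partition n) : ℚ :=
  Q ^ (∑ i ∈ Finset.Icc 1 n, ((l.parts.filter fun t => i ≤ t).card) ^ 2) *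
    ∏ i ∈ Finset.Icc 1 n, ∏ j ∈ Finset.Icc 1 (l.parts.count i), (1 - Q⁻¹ ^ j)

/-- `Σ_{λ ⊢ m, λ₁ ≤ b} 1 / c(λ, Q)`. -/
def partSum (b : ℕ) (Q : ℚ) (m : ℕ) : ℚ :=
  ∑ l : Nat.Partition m, if l.parts.sup ≤ b then (cInd Q l)⁻¹ else 0

/-- The reciprocal `f*` of a polynomial `f`: `f*(X) = f(0)⁻¹ · X^(deg f) · f(1/X)`. -/
def recipPoly {F : Type*} [Field F] (f : Polynomial F) : Polynomial F :=
  Polynomial.C ((f.coeff 0)⁻¹) * f.reverse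

/-- `f̃(X) = (σ(f(0)))⁻¹ · X^(deg f) · f̄(1/X)` where `f̄` applies `σ` to the coefficients. -/
def tildePoly {F : Type*} [Field F] (σ : F →+* F) (f : Polynomial F) : Polynomial F :=
  Polynomial.C ((σ (f.coeff 0))⁻¹) * (f.map σ).reverse

/-- Wall's centralizer order for a symplectic signed partition given by the partition `l`
together with the set `S` of even parts carrying the sign `−`. -/
def cSpVal (p k : ℕ) [Fact p.Prime] (δ : GaloisField p k) {n : ℕ}
    (l : Nat.Partition n) (S : Finset ℕ) : ℚ :=
  ((p ^ k : ℕ) : ℚ) ^ (∑ μ ∈ Finset.Icc 1 n, ∑ ν ∈ Finset.Icc 1 n,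
      if μ < ν then μ * l.parts.count μ * l.parts.count ν else 0) *
    ((p ^ k : ℕ) : ℚ) ^ ((∑ μ ∈ Finset.Icc 1 n, (μ - 1) * l.parts.count μ ^ 2 +
      ∑ μ ∈ Finset.Icc 1 n, if Even μ then l.parts.count μ else 0) / 2) *
    ∏ μ ∈ Finset.Icc 1 n,
      if Odd μ then (Nat.card (SpGrp (GaloisField p k) (l.parts.count μ)) : ℚ)
      else if μ ∈ S then (Nat.card (OGrp δ false (l.parts.count μ)) : ℚ)
      else (Nat.card (OGrp δ true (l.parts.count μ)) : ℚ)

/-- `Σ_{λ^± symplectic signed partition of n, λ₁ ≤ bound} 1 / c_Sp(λ^±)`. -/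
def sspSum (p k : ℕ) [Fact p.Prime] (δ : GaloisField p k) (bound n : ℕ) : ℚ :=
  ∑ l : Nat.Partition n, ∑ S ∈ (l.parts.toFinset.filter fun μ => Even μ).powerset,
    if (∀ μ, Odd μ → Even (l.parts.count μ)) ∧ l.parts.sup ≤ bound then
      (cSpVal p k δ l S)⁻¹ else 0

/-- Wall's centralizer order for an orthogonal signed partition given by the partition `l`
together with the set `S` of odd parts carrying the sign `−`. -/
def cOVal (p k : ℕ) [Fact p.Prime] (δ : GaloisField p k) {n : ℕ}
    (l : Nat.Partition n) (S : Finset ℕ) : ℚ :=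
  ((p ^ k : ℕ) : ℚ) ^ (∑ μ ∈ Finset.Icc 1 n, ∑ ν ∈ Finset.Icc 1 n,
      if μ < ν then μ * l.parts.count μ * l.parts.count ν else 0) *
    ((p ^ k : ℕ) : ℚ) ^ ((∑ μ ∈ Finset.Icc 1 n, (μ - 1) * l.parts.count μ ^ 2) / 2) *
    ∏ μ ∈ Finset.Icc 1 n,
      if Odd μ then
        (if μ ∈ S then (Nat.card (OGrp δ false (l.parts.count μ)) : ℚ)
         else (Nat.card (OGrp δ true (l.parts.count μ)) : ℚ))
      else (((p ^ k : ℕ) : ℚ) ^ (l.parts.count μ / 2))⁻¹ *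
        (Nat.card (SpGrp (GaloisField p k) (l.parts.count μ)) : ℚ)

/-- `Σ_{λ^± orthogonal signed partition of n, λ₁ ≤ bound} 1 / c_O(λ^±)`. -/
def ospSum (p k : ℕ) [Fact p.Prime] (δ : GaloisField p k) (bound n : ℕ) : ℚ :=
  ∑ l : Nat.Partition n, ∑ S ∈ (l.parts.toFinset.filter fun μ => Odd μ).powerset,
    if (∀ μ, Even μ → Even (l.parts.count μ)) ∧ l.parts.sup ≤ bound then
      (cOVal p k δ l S)⁻¹ else 0

/-- The unipotent Jordan block of size `s`. -/
def jordanBlock (F : Type*) [Field F] (s : ℕ) : Matrix (Fin s) (Fin s) F :=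
  Matrix.of fun i j => if j = i then 1 else if (j : ℕ) = (i : ℕ) + 1 then 1 else 0

/-- The block-diagonal unipotent matrix `J_λ` associated to the list of parts `l`. -/
def jordanMat (F : Type*) [Field F] (l : List ℕ) :
    Matrix (Σ i : Fin l.length, Fin (l.get i)) (Σ i : Fin l.length, Fin (l.get i)) F :=
  Matrix.blockDiagonal' fun i => jordanBlock F (l.get i)


/-!
Let `α` be the root of `f` in `K = F_{q²}[X]/(f)` and `y` its order. Applying the `q`-th power
map shows that `1/α^q` is a root of `f̃`, which is monic of the same degree as `f`; since `f` is
irreducible, `f̃ = f` exactly when `1/α^q` is a root of `f`, i.e. one of the conjugates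
`α^(q^(2i))`. In `ℤ/y` this says `q^(2i) + q = 0` for some `i`. As `α` generates `K`, `q²` has
order exactly `2m+1` modulo `y`, and for `u` with `u^(2(2m+1)) = 1` such an `i` exists iff
`u^(2m+1) = -1`. The minimality condition of `D̃_m` then comes for free: `q^t = -1` with `t` odd
gives `q^(2t) = 1`, so `2m+1 ∣ t`.
-/

theorem Polynomial.Monic.eq_iff_aeval_eq_zero {F K : Type*} [Field F] [Field K] [Algebra F K]
    {f g : F[X]} (hf : f.Monic) (hirr : Irreducible f) (hg : g.Monic)
    (hdeg : g.natDegree ≤ f.natDegree) {β : K} (hβ : aeval β g = 0) :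
    g = f ↔ aeval β f = 0 := by
  refine ⟨fun h => h ▸ hβ, fun h => ?_⟩
  have hmin : f = minpoly F β := minpoly.eq_of_irreducible_of_monic hirr h hf
  exact eq_of_monic_of_dvd_of_natDegree_le hf hg (hmin ▸ minpoly.dvd F β hβ) hdeg

section TildePoly

variable {F : Type*} [Field F] (σ : F →+* F) {f : F[X]}

theorem natDegree_tildePoly (h0 : f.coeff 0 ≠ 0) :
    (tildePoly σ f).natDegree = f.natDegree := by
  have hσ0 : σ (f.coeff 0) ≠ 0 := (map_ne_zero σ).mpr h0
  rw [tildePoly, natDegree_C_mul (inv_ne_zero hσ0), reverse_natDegree,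
    natTrailingDegree_eq_zero.mpr (Or.inr (by rwa [coeff_map])), natDegree_map, Nat.sub_zero]

theorem monic_tildePoly (h0 : f.coeff 0 ≠ 0) : (tildePoly σ f).Monic := by
  have hσ0 : σ (f.coeff 0) ≠ 0 := (map_ne_zero σ).mpr h0
  have htrail : (f.map σ).natTrailingDegree = 0 :=
    natTrailingDegree_eq_zero.mpr (Or.inr (by rwa [coeff_map]))
  rw [Monic, tildePoly, leadingCoeff_mul, leadingCoeff_C, reverse_leadingCoeff, trailingCoeff,
    htrail, coeff_map, inv_mul_cancel₀ hσ0]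

variable {K : Type*} [Field K] [Algebra F K] (ψ : K →+* K)
  (hψ : ∀ a, ψ (algebraMap F K a) = algebraMap F K (σ a))
include hψ

theorem aeval_map_of_comp_eq (x : K) : aeval (ψ x) (f.map σ) = ψ (aeval x f) := by
  rw [aeval_def, aeval_def, eval₂_map, hom_eval₂]
  congr 1
  exact RingHom.ext fun a => (hψ a).symm

theorem aeval_inv_tildePoly_eq_zero {α : K} (hα0 : α ≠ 0) (hα : aeval α f = 0) :
    aeval (ψ α)⁻¹ (tildePoly σ f) = 0 := by
  let _ : Invertible (ψ α) := invertibleOfNonzero ((map_ne_zero ψ).mpr hα0)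
  have hrev : aeval ⅟(ψ α) (f.map σ).reverse = 0 := by
    rw [aeval_def, eval₂_reverse_eq_zero_iff, ← aeval_def, aeval_map_of_comp_eq σ ψ hψ, hα,
      map_zero]
  rw [tildePoly, map_mul, ← invOf_eq_inv, hrev, mul_zero]

theorem tildePoly_eq_self_iff (hf : f.Monic) (hirr : Irreducible f) (h0 : f.coeff 0 ≠ 0)
    {α : K} (hα0 : α ≠ 0) (hα : aeval α f = 0) :
    tildePoly σ f = f ↔ aeval (ψ α)⁻¹ f = 0 :=
  hf.eq_iff_aeval_eq_zero hirr (monic_tildePoly σ h0) (natDegree_tildePoly σ h0).le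
    (aeval_inv_tildePoly_eq_zero σ ψ hψ hα0 hα)

end TildePoly

theorem IsOfFinOrder.pow_eq_pow_iff_natCast_eq {M : Type*} [Monoid M] {x : M}
    (hx : IsOfFinOrder x) (a b : ℕ) : x ^ a = x ^ b ↔ (a : ZMod (orderOf x)) = b := by
  rw [hx.pow_eq_pow_iff_modEq, ZMod.natCast_eq_natCast_iff]

theorem FiniteField.frobeniusAlgHom_pow_apply {F R : Type*} [Field F] [Fintype F] [CommRing R]
    [Algebra F R] (n : ℕ) (x : R) :
    (frobeniusAlgHom F R ^ n) x = x ^ Fintype.card F ^ n := by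
  rw [AlgHom.coe_pow, coe_frobeniusAlgHom, pow_iterate]

namespace AdjoinRoot

variable {F : Type*} [Field F] {f : F[X]} [hirr : Fact (Irreducible f)]

theorem finrank_eq_natDegree : Module.finrank F (AdjoinRoot f) = f.natDegree :=
  (powerBasis hirr.out.ne_zero).finrank

theorem root_ne_zero (h0 : f.coeff 0 ≠ 0) : root f ≠ 0 := by
  intro h
  have hroot : aeval (root f) f = 0 := eval₂_root f
  rw [h, ← coeff_zero_eq_aeval_zero', map_eq_zero_iff _ (algebraMap F _).injective] at hroot
  exact h0 hroot

variable [Fintype F]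

instance : Module.Finite F (AdjoinRoot f) := (powerBasis hirr.out.ne_zero).finite

instance : Finite (AdjoinRoot f) := Module.finite_of_finite F

theorem root_pow_card_pow_eq_root_iff (t : ℕ) :
    root f ^ Fintype.card F ^ t = root f ↔ f.natDegree ∣ t := by
  let _ := Fintype.ofFinite (AdjoinRoot f)
  rw [← finrank_eq_natDegree, ← FiniteField.orderOf_frobeniusAlgHom, orderOf_dvd_iff_pow_eq_one,
    ← FiniteField.frobeniusAlgHom_pow_apply]
  exact ⟨fun h => algHom_ext (by rw [h, AlgHom.one_apply]), fun h => by rw [h, AlgHom.one_apply]⟩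

-- Every `F`-endomorphism of the finite field `F[X]/(f)` is a power of the Frobenius.
theorem aeval_eq_zero_iff_exists_eq_root_pow (β : AdjoinRoot f) :
    aeval β f = 0 ↔ ∃ i, β = root f ^ Fintype.card F ^ i := by
  let _ := Fintype.ofFinite (AdjoinRoot f)
  constructor
  · intro hβ
    obtain ⟨i, hi⟩ := (FiniteField.bijective_frobeniusAlgHom_pow F (AdjoinRoot f)).2
      (liftAlgHom f (Algebra.ofId F _) β hβ)
    refine ⟨i, ?_⟩
    rw [← FiniteField.frobeniusAlgHom_pow_apply]
    exact ((DFunLike.congr_fun hi (root f)).trans (liftAlgHom_root ..)).symm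
  · rintro ⟨i, rfl⟩
    rw [← FiniteField.frobeniusAlgHom_pow_apply, aeval_algHom_apply, aeval_eq, mk_self, map_zero]

theorem isOfFinOrder_root (h0 : f.coeff 0 ≠ 0) : IsOfFinOrder (root f) :=
  (IsUnit.mk0 _ (root_ne_zero h0)).isOfFinOrder

theorem card_pow_eq_one_iff (h0 : f.coeff 0 ≠ 0) (t : ℕ) :
    (Fintype.card F : ZMod (orderOf (root f))) ^ t = 1 ↔ f.natDegree ∣ t := by
  rw [← root_pow_card_pow_eq_root_iff, ← Nat.cast_pow, ← Nat.cast_one,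
    ← (isOfFinOrder_root h0).pow_eq_pow_iff_natCast_eq, pow_one]

end AdjoinRoot

theorem pow_eq_neg_one_of_pow_two_mul_add_self_eq_zero {R : Type*} [CommRing R] {u : R}
    {n i : ℕ} (hn : Odd n) (hu : u ^ (2 * n) = 1) (hi : u ^ (2 * i) + u = 0) : u ^ n = -1 := by
  obtain ⟨b, rfl⟩ := hn
  have hodd_pow : u ^ (2 * (i + 2 * b) + 1) = -1 := by
    calc u ^ (2 * (i + 2 * b) + 1) = u ^ (2 * i) * u ^ (4 * b + 1) := by ring
      _ = -u ^ (2 * (2 * b + 1)) := by rw [eq_neg_of_add_eq_zero_left hi]; ring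
      _ = -1 := by rw [hu]
  calc u ^ (2 * b + 1) = u ^ (2 * b + 1) * (u ^ (2 * (2 * b + 1))) ^ (i + 2 * b) := by
        rw [hu, one_pow, mul_one]
    _ = (u ^ (2 * (i + 2 * b) + 1)) ^ (2 * b + 1) := by ring
    _ = -1 := by rw [hodd_pow, Odd.neg_one_pow ⟨b, rfl⟩]

theorem exists_pow_two_mul_add_self_eq_zero_iff {R : Type*} [CommRing R] {u : R} {n : ℕ}
    (hn : Odd n) (hu : u ^ (2 * n) = 1) : (∃ i, u ^ (2 * i) + u = 0) ↔ u ^ n + 1 = 0 := by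
  refine ⟨fun ⟨i, hi⟩ => ?_, fun h => ?_⟩
  · rw [pow_eq_neg_one_of_pow_two_mul_add_self_eq_zero hn hu hi, neg_add_cancel]
  · obtain ⟨m, rfl⟩ := hn
    exact ⟨m + 1, by linear_combination u * h⟩

theorem mem_DtildeSet_iff {q y m : ℕ} (hy : 0 < y)
    (hord : ∀ t, (q : ZMod y) ^ (2 * t) = 1 → 2 * m + 1 ∣ t) :
    y ∈ DtildeSet q m ↔ (q : ZMod y) ^ (2 * m + 1) + 1 = 0 := by
  have hdvd : ∀ t, y ∣ q ^ t + 1 ↔ (q : ZMod y) ^ t + 1 = 0 := fun t => by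
    rw [← ZMod.natCast_eq_zero_iff]; push_cast; rfl
  refine ⟨fun h => (hdvd _).mp h.2.1, fun h => ⟨hy, (hdvd _).mpr h, fun t ht hlt hyt => ?_⟩⟩
  have h2t : (q : ZMod y) ^ (2 * t) = 1 := by
    rw [mul_comm, pow_mul, eq_neg_of_add_eq_zero_left ((hdvd t).mp hyt)]; norm_num
  exact absurd (Nat.le_of_dvd ht.pos (hord t h2t)) (not_le.mpr hlt)

theorem statement8_general (p k m : ℕ) [Fact p.Prime] (hk : k ≠ 0)
    (f : Polynomial (GaloisField p (2 * k))) (hf : f.Monic) (hirr : Irreducible f)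
    (hdeg : f.natDegree = 2 * m + 1) (h0 : f.coeff 0 ≠ 0) :
    tildePoly (iterateFrobenius (GaloisField p (2 * k)) p k) f = f ↔
      orderOf (AdjoinRoot.root f) ∈ DtildeSet (p ^ k) m := by
  have := Fact.mk hirr
  set F := GaloisField p (2 * k)
  set K := AdjoinRoot f
  set α : K := AdjoinRoot.root f
  let _ : Fintype F := Fintype.ofFinite F
  have _ : CharP K p := charP_of_injective_algebraMap (algebraMap F K).injective p
  have hcard : Fintype.card F = (p ^ k) ^ 2 := by
    rw [← Nat.card_eq_fintype_card, GaloisField.card p _ (by omega), ← pow_mul, mul_comm]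
  have hord (t : ℕ) : ((p ^ k : ℕ) : ZMod (orderOf α)) ^ (2 * t) = 1 ↔ 2 * m + 1 ∣ t := by
    rw [← hdeg, ← AdjoinRoot.card_pow_eq_one_iff h0, hcard, pow_mul, ← Nat.cast_pow]
  have hψ (a : F) : iterateFrobenius K p k (algebraMap F K a)
      = algebraMap F K (iterateFrobenius F p k a) := by
    simp only [iterateFrobenius_def, map_pow]
  have hα0 : α ≠ 0 := AdjoinRoot.root_ne_zero h0
  rw [tildePoly_eq_self_iff _ _ hψ hf hirr h0 hα0 (AdjoinRoot.eval₂_root f),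
    AdjoinRoot.aeval_eq_zero_iff_exists_eq_root_pow, mem_DtildeSet_iff (orderOf_pos_iff.mpr
    (AdjoinRoot.isOfFinOrder_root h0)) fun t => (hord t).mp,
    ← exists_pow_two_mul_add_self_eq_zero_iff ⟨m, rfl⟩ ((hord _).mpr dvd_rfl)]
  refine exists_congr fun i => ?_
  rw [iterateFrobenius_def, eq_comm, ← mul_eq_one_iff_eq_inv₀ (pow_ne_zero _ hα0), ← pow_add,
    ← pow_zero α, (AdjoinRoot.isOfFinOrder_root h0).pow_eq_pow_iff_natCast_eq, hcard, ← pow_mul,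
    Nat.cast_add, Nat.cast_pow, Nat.cast_zero, add_comm]

/-- A monic irreducible polynomial of odd degree `2m+1` over `F_{q²}` with
nonzero constant term is `~`-symmetric iff the order of (a root of) `f` lies in `D̃_m`. -/
theorem statement8 (p k m : ℕ) [Fact p.Prime] (hodd : Odd p) (hk : k ≠ 0)
    (f : Polynomial (GaloisField p (2 * k))) (hf : f.Monic) (hirr : Irreducible f)
    (hdeg : f.natDegree = 2 * m + 1) (h0 : f.coeff 0 ≠ 0) :
    tildePoly (iterateFrobenius (GaloisField p (2 * k)) p k) f = f ↔
      orderOf (AdjoinRoot.root f) ∈ DtildeSet (p ^ k) m :=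
  statement8_general p k m hk f hf hirr hdeg h0
end
end

section
/- Let m ≥ 0, let e ∈ D̃_m, and let β be an element of multiplicative order e in the algebraic closure of F_{q²}. Then the polynomial f_β(X) = Π_{i=0}^{2m} (X − β^{q^{2i}}) has all its coefficients in F_{q²}, is a monic irreducible polynomial over F_{q²} of degree 2m+1, and is ~-symmetric, i.e. f̃_β = f_β. -/
open Matrix Polynomial
open scoped Classical

noncomputable section

section AuxStatement9

open Polynomial

private lemma aux_monic_eq_of_dvd {F : Type*} [Field F] {a b : Polynomial F}
    (ha : a.Monic) (hb : b.Monic) (h : a ∣ b) (hd : b.natDegree ≤ a.natDegree) : a = b := by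
  obtain ⟨c, rfl⟩ := h
  have hc : c ≠ 0 := by
    rintro rfl
    rw [mul_zero] at hb
    exact hb.ne_zero rfl
  rw [Polynomial.natDegree_mul ha.ne_zero hc] at hd
  have hc0 : c.natDegree = 0 := by omega
  obtain ⟨x, rfl⟩ := Polynomial.natDegree_eq_zero.mp hc0
  have := hb.leadingCoeff
  rw [Polynomial.leadingCoeff_mul, ha.leadingCoeff, one_mul, Polynomial.leadingCoeff_C] at this
  rw [this, Polynomial.C_1, mul_one]

private lemma aux_exists_preimage {F K : Type*} [Field F] [Fintype F] [Field K]
    (emb : F →+* K) (x : K) (hx : x ^ Fintype.card F = x) : ∃ a : F, emb a = x := by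
  classical
  set Q := Fintype.card F with hQdef
  have hQ : 1 < Q := Fintype.one_lt_card
  set h : Polynomial K := X ^ Q - X with hh
  have hdeg : h.natDegree = Q := FiniteField.X_pow_card_sub_X_natDegree_eq K hQ
  have hne : h ≠ 0 := by
    intro h0
    rw [h0, natDegree_zero] at hdeg
    omega
  have hrootx : x ∈ h.roots := by
    rw [mem_roots hne]
    simp [hh, IsRoot, hx]
  have hrootF : ∀ a : F, (emb a) ∈ h.roots := by
    intro a
    rw [mem_roots hne]
    simp only [hh, IsRoot, eval_sub, eval_pow, eval_X]
    rw [← map_pow, FiniteField.pow_card, sub_self]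
  by_contra hcon
  push_neg at hcon
  have hx' : x ∉ Finset.univ.image emb := by
    intro hmem
    obtain ⟨a, _, ha⟩ := Finset.mem_image.mp hmem
    exact hcon a ha
  have hsub : insert x (Finset.univ.image emb) ⊆ h.roots.toFinset := by
    intro y hy
    rcases Finset.mem_insert.mp hy with rfl | hy
    · exact Multiset.mem_toFinset.mpr hrootx
    · obtain ⟨a, _, rfl⟩ := Finset.mem_image.mp hy
      exact Multiset.mem_toFinset.mpr (hrootF a)
  have hcard : Q + 1 ≤ (h.roots.toFinset).card := by
    have h1 : (insert x (Finset.univ.image emb)).card = Q + 1 := by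
      rw [Finset.card_insert_of_notMem hx',
        Finset.card_image_of_injective _ emb.injective, Finset.card_univ]
    calc Q + 1 = (insert x (Finset.univ.image emb)).card := h1.symm
      _ ≤ _ := Finset.card_le_card hsub
  have h2 : h.roots.toFinset.card ≤ Q :=
    le_trans (Multiset.toFinset_card_le _) (le_trans (Polynomial.card_roots' h) hdeg.le)
  omega

end AuxStatement9

/-- For `e ∈ D̃_m` and `β` of multiplicative order `e` in the algebraic
closure of `F_{q²}`, the polynomial `f_β(X) = Π_{i=0}^{2m} (X − β^(q^(2i)))` has its
coefficients in `F_{q²}` and is monic irreducible of degree `2m+1` and `~`-symmetric. -/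
theorem statement9 (p k m e : ℕ) [Fact p.Prime] (hodd : Odd p) (hk : k ≠ 0)
    (he : e ∈ DtildeSet (p ^ k) m)
    (β : AlgebraicClosure (GaloisField p (2 * k))) (hβ : orderOf β = e) :
    ∃ g : Polynomial (GaloisField p (2 * k)),
      g.map (algebraMap (GaloisField p (2 * k)) (AlgebraicClosure (GaloisField p (2 * k)))) =
        ∏ i ∈ Finset.range (2 * m + 1),
          (Polynomial.X - Polynomial.C (β ^ (p ^ k) ^ (2 * i))) ∧
      g.Monic ∧ Irreducible g ∧ g.natDegree = 2 * m + 1 ∧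
      tildePoly (iterateFrobenius (GaloisField p (2 * k)) p k) g = g := by
  classical
  obtain ⟨hepos, hediv, hemin⟩ := he
  have hp2 : 2 ≤ p := (Fact.out : p.Prime).two_le
  set emb := algebraMap (GaloisField p (2 * k))
    (AlgebraicClosure (GaloisField p (2 * k))) with hemb
  set q := p ^ k with hq
  set n := 2 * m + 1 with hn
  set Q := p ^ (2 * k) with hQ
  have hQq : Q = q ^ 2 := by rw [hQ, hq, ← pow_mul, mul_comm 2 k]
  have hQi : ∀ i : ℕ, Q ^ i = q ^ (2 * i) := fun i => by rw [hQq, ← pow_mul]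
  haveI : NeZero e := NeZero.of_pos hepos
  have hβe : β ^ e = 1 := by rw [← hβ]; exact pow_orderOf_eq_one β
  have hβ0 : β ≠ 0 := by
    intro h0
    rw [h0, zero_pow hepos.ne'] at hβe
    exact one_ne_zero hβe.symm
  have hpowiff : ∀ a b : ℕ, β ^ a = β ^ b ↔ a ≡ b [MOD e] := by
    intro a b
    set βu : (AlgebraicClosure (GaloisField p (2 * k)))ˣ := Units.mk0 β hβ0 with hβu
    have h1 : orderOf βu = e := by
      rw [← hβ, ← orderOf_units]
      congr 1
    have h2 : β ^ a = β ^ b ↔ βu ^ a = βu ^ b := by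
      constructor
      · intro h
        ext
        simpa [hβu] using h
      · intro h
        have h3 := congrArg Units.val h
        simpa [hβu] using h3
    rw [h2, pow_eq_pow_iff_modEq, h1]
  set u : ZMod e := (q : ZMod e) with hu
  have hun : u ^ n = -1 := by
    have h0 : ((q ^ n + 1 : ℕ) : ZMod e) = 0 :=
      (ZMod.natCast_eq_zero_iff _ _).mpr hediv
    push_cast at h0
    rw [hu]
    linear_combination h0
  have hu2n : u ^ (2 * n) = 1 := by rw [mul_comm, pow_mul, hun, neg_one_sq]
  have key : ∀ d, 0 < d → d < n → u ^ (2 * d) ≠ 1 := by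
    intro d hd0 hdn hcon
    set d₀ := Nat.gcd d n with hd₀
    have hd₀n : d₀ ∣ n := Nat.gcd_dvd_right d n
    have hd₀d : d₀ ∣ d := Nat.gcd_dvd_left d n
    have hd₀pos : 0 < d₀ := Nat.gcd_pos_of_pos_left _ hd0
    have hord : orderOf u ∣ 2 * d₀ := by
      have h1 : orderOf u ∣ 2 * d := orderOf_dvd_of_pow_eq_one hcon
      have h2 : orderOf u ∣ 2 * n := orderOf_dvd_of_pow_eq_one hu2n
      have h3 : Nat.gcd (2 * d) (2 * n) = 2 * d₀ := by rw [hd₀, Nat.gcd_mul_left]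
      exact h3 ▸ Nat.dvd_gcd h1 h2
    have hud₀ : u ^ (2 * d₀) = 1 := orderOf_dvd_iff_pow_eq_one.mp hord
    obtain ⟨s, hs⟩ := hd₀n
    have hsodd : Odd s := by
      rcases Nat.even_or_odd s with hev | ho
      · exfalso
        have h9 : Even n := hs ▸ hev.mul_left d₀
        rw [hn] at h9
        obtain ⟨w, hw⟩ := h9
        omega
      · exact ho
    obtain ⟨t, ht⟩ := hsodd
    have hud : u ^ d₀ = -1 := by
      have h5 : u ^ n = (u ^ (2 * d₀)) ^ t * u ^ d₀ := by
        rw [← pow_mul, ← pow_add, hs, ht]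
        congr 1
        ring
      rw [hud₀, one_pow, one_mul] at h5
      rw [← h5, hun]
    have hdvd : e ∣ q ^ d₀ + 1 := by
      have h6 : ((q ^ d₀ + 1 : ℕ) : ZMod e) = 0 := by
        push_cast
        rw [← hu, hud]
        ring
      exact (ZMod.natCast_eq_zero_iff _ _).mp h6
    have hd₀odd : Odd d₀ := by
      rcases Nat.even_or_odd d₀ with hev | ho
      · exfalso
        have h9 : Even n := hs ▸ hev.mul_right s
        rw [hn] at h9
        obtain ⟨w, hw⟩ := h9
        omega
      · exact ho
    exact hemin d₀ hd₀odd (lt_of_le_of_lt (Nat.le_of_dvd hd0 hd₀d) hdn) hdvd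
  have hQmod : ∀ i : ℕ, ((Q ^ i : ℕ) : ZMod e) = u ^ (2 * i) := by
    intro i
    rw [hQi i]
    push_cast
    rw [hu]
  have hltcase : ∀ i j : ℕ, i < j → j < n → β ^ Q ^ i ≠ β ^ Q ^ j := by
    intro i j hij hjn hcon
    have hmod : (Q ^ i : ℕ) ≡ Q ^ j [MOD e] := (hpowiff _ _).mp hcon
    have hcast : u ^ (2 * i) = u ^ (2 * j) := by
      rw [← hQmod i, ← hQmod j]
      exact (ZMod.natCast_eq_natCast_iff _ _ _).mpr hmod
    have h2 : u ^ (2 * i) * u ^ (2 * (n - i)) = 1 := by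
      rw [← pow_add]
      have h8 : 2 * i + 2 * (n - i) = 2 * n := by omega
      rw [h8, hu2n]
    have h3 : u ^ (2 * (j - i)) = 1 := by
      have h4 : u ^ (2 * (j - i)) * (u ^ (2 * i) * u ^ (2 * (n - i))) =
          u ^ (2 * j) * u ^ (2 * (n - i)) := by
        rw [← pow_add, ← pow_add, ← pow_add]
        congr 1
        omega
      rw [h2, mul_one, ← hcast, h2] at h4
      exact h4
    exact key (j - i) (by omega) (by omega) h3
  have hrinj : ∀ i, i < n → ∀ j, j < n → β ^ Q ^ i = β ^ Q ^ j → i = j := by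
    intro i hi j hj hij
    rcases lt_trichotomy i j with h | h | h
    · exact absurd hij (hltcase i j h hj)
    · exact h
    · exact absurd hij.symm (hltcase j i h hi)
  set P : Polynomial (AlgebraicClosure (GaloisField p (2 * k))) := ∏ i ∈ Finset.range n, (Polynomial.X - Polynomial.C (β ^ Q ^ i))
    with hP
  have hPgoal : P = ∏ i ∈ Finset.range n, (Polynomial.X - Polynomial.C (β ^ q ^ (2 * i))) :=
    Finset.prod_congr rfl fun i _ => by rw [hQi i]
  set ψ := iterateFrobenius (AlgebraicClosure (GaloisField p (2 * k))) p (2 * k) with hψdef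
  have hψ : ∀ x : (AlgebraicClosure (GaloisField p (2 * k))), ψ x = x ^ Q := fun x => by
    rw [hψdef, iterateFrobenius_def, ← hQ]
  haveI : Fintype (GaloisField p (2 * k)) := Fintype.ofFinite (GaloisField p (2 * k))
  have hcardF : Fintype.card (GaloisField p (2 * k)) = Q := by
    rw [← Nat.card_eq_fintype_card, GaloisField.card p (2 * k) (by omega), ← hQ]
  have hFpowi : ∀ (i : ℕ) (a : (GaloisField p (2 * k))), a ^ Q ^ i = a := by
    intro i a
    rw [← hcardF]
    exact FiniteField.pow_card_pow i a
  have hβQn : β ^ Q ^ n = β ^ Q ^ 0 := by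
    apply (hpowiff _ _).mpr
    apply (ZMod.natCast_eq_natCast_iff _ _ _).mp
    rw [hQmod n, hQmod 0, hu2n, mul_zero, pow_zero]
  have hmapP : P.map ψ = P := by
    have h5 : P.map ψ = ∏ i ∈ Finset.range n,
        (Polynomial.X - Polynomial.C (β ^ Q ^ (i + 1))) := by
      rw [hP, Polynomial.map_prod]
      refine Finset.prod_congr rfl fun i _ => ?_
      rw [Polynomial.map_sub, Polynomial.map_X, Polynomial.map_C, hψ, ← pow_mul, ← pow_succ]
    have e1 : ∏ i ∈ Finset.range (n + 1), (Polynomial.X - Polynomial.C (β ^ Q ^ i)) =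
        (∏ i ∈ Finset.range n, (Polynomial.X - Polynomial.C (β ^ Q ^ (i + 1)))) *
          (Polynomial.X - Polynomial.C (β ^ Q ^ 0)) := Finset.prod_range_succ' _ n
    have e2 : ∏ i ∈ Finset.range (n + 1), (Polynomial.X - Polynomial.C (β ^ Q ^ i)) =
        (∏ i ∈ Finset.range n, (Polynomial.X - Polynomial.C (β ^ Q ^ i))) *
          (Polynomial.X - Polynomial.C (β ^ Q ^ n)) := Finset.prod_range_succ _ n
    have hcancel : (P.map ψ) * (Polynomial.X - Polynomial.C (β ^ Q ^ 0)) =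
        P * (Polynomial.X - Polynomial.C (β ^ Q ^ 0)) := by
      rw [h5, ← e1, e2, hβQn, ← hP]
    exact mul_right_cancel₀ (Polynomial.X_sub_C_ne_zero _) hcancel
  have hcoeff : ∀ j : ℕ, P.coeff j ∈ Set.range ⇑emb := by
    intro j
    have hfix : P.coeff j ^ Fintype.card (GaloisField p (2 * k)) = P.coeff j := by
      rw [hcardF]
      calc P.coeff j ^ Q = ψ (P.coeff j) := (hψ _).symm
        _ = (P.map ψ).coeff j := (Polynomial.coeff_map ψ j).symm
        _ = P.coeff j := by rw [hmapP]
    obtain ⟨a, ha⟩ := aux_exists_preimage emb (P.coeff j) hfix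
    exact ⟨a, ha⟩
  obtain ⟨g, hg⟩ := (Polynomial.mem_lifts P).mp ((Polynomial.lifts_iff_coeff_lifts P).mpr hcoeff)
  have hPmonic : P.Monic :=
    Polynomial.monic_prod_of_monic _ _ fun i _ => Polynomial.monic_X_sub_C _
  have hgmonic : g.Monic := Polynomial.monic_map_iff.mp (by rw [hg]; exact hPmonic)
  have hPdeg : P.natDegree = n := by
    rw [hP, Polynomial.natDegree_prod_of_monic _ _ fun i _ => Polynomial.monic_X_sub_C _]
    simp only [Polynomial.natDegree_X_sub_C]
    rw [Finset.sum_const, smul_eq_mul, mul_one, Finset.card_range]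
  have hgdeg : g.natDegree = n := by
    rw [← Polynomial.natDegree_map (p := g) emb, hg, hPdeg]
  haveI : Algebra.IsAlgebraic (GaloisField p (2 * k)) (AlgebraicClosure (GaloisField p (2 * k))) := AlgebraicClosure.isAlgebraic (GaloisField p (2 * k))
  have hint : IsIntegral (GaloisField p (2 * k)) β := Algebra.IsIntegral.isIntegral β
  have haeg : (Polynomial.aeval β) g = 0 := by
    rw [Polynomial.aeval_def, Polynomial.eval₂_eq_eval_map, hg, hP, Polynomial.eval_prod]
    apply Finset.prod_eq_zero (Finset.mem_range.mpr (show 0 < n by omega))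
    simp
  have hmpdvd : minpoly (GaloisField p (2 * k)) β ∣ g := minpoly.dvd (GaloisField p (2 * k)) β haeg
  have hmproot : ∀ i : ℕ, Polynomial.eval (β ^ Q ^ i) ((minpoly (GaloisField p (2 * k)) β).map emb) = 0 := by
    intro i
    set ψi := iterateFrobenius (AlgebraicClosure (GaloisField p (2 * k))) p (2 * k * i) with hψi
    have hψix : ∀ x : (AlgebraicClosure (GaloisField p (2 * k))), ψi x = x ^ Q ^ i := fun x => by
      rw [hψi, iterateFrobenius_def, hQ, ← pow_mul]
    have hfix : ((minpoly (GaloisField p (2 * k)) β).map emb).map ψi = (minpoly (GaloisField p (2 * k)) β).map emb := by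
      rw [Polynomial.map_map]
      congr 1
      ext a
      simp only [RingHom.comp_apply, RingHom.coe_comp, Function.comp_apply]
      rw [hψix, ← _root_.map_pow, hFpowi]
    have h0 : Polynomial.eval β ((minpoly (GaloisField p (2 * k)) β).map emb) = 0 := by
      rw [Polynomial.eval_map, ← Polynomial.aeval_def]
      exact minpoly.aeval (GaloisField p (2 * k)) β
    calc Polynomial.eval (β ^ Q ^ i) ((minpoly (GaloisField p (2 * k)) β).map emb)
        = Polynomial.eval (ψi β) (((minpoly (GaloisField p (2 * k)) β).map emb).map ψi) := by rw [hfix, hψix]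
      _ = ψi (Polynomial.eval β ((minpoly (GaloisField p (2 * k)) β).map emb)) := by
          rw [Polynomial.eval_map, Polynomial.eval₂_hom]
      _ = 0 := by rw [h0, _root_.map_zero]
  have hrinj' : Function.Injective fun i : Fin n => β ^ Q ^ (i : ℕ) := by
    intro i j hij
    exact Fin.ext (hrinj i i.2 j j.2 hij)
  have hPdvd : P ∣ (minpoly (GaloisField p (2 * k)) β).map emb := by
    have hPfin : P = ∏ i : Fin n, (Polynomial.X - Polynomial.C (β ^ Q ^ (i : ℕ))) := by
      rw [hP, Finset.prod_range]
    rw [hPfin]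
    apply Fintype.prod_dvd_of_coprime (Polynomial.pairwise_coprime_X_sub_C hrinj')
    intro i
    rw [Polynomial.dvd_iff_isRoot]
    exact hmproot i
  have hmpne : minpoly (GaloisField p (2 * k)) β ≠ 0 := minpoly.ne_zero hint
  have hdegge : n ≤ (minpoly (GaloisField p (2 * k)) β).natDegree := by
    have h9 := Polynomial.natDegree_le_of_dvd hPdvd (Polynomial.map_ne_zero hmpne)
    rwa [hPdeg, Polynomial.natDegree_map] at h9
  have hgeq : minpoly (GaloisField p (2 * k)) β = g :=
    aux_monic_eq_of_dvd (minpoly.monic hint) hgmonic hmpdvd (by rw [hgdeg]; exact hdegge)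
  have hgirr : Irreducible g := hgeq ▸ minpoly.irreducible hint
  -- tilde symmetry
  set σ := iterateFrobenius (GaloisField p (2 * k)) p k with hσdef
  have hσ : ∀ a : (GaloisField p (2 * k)), σ a = a ^ q := fun a => by rw [hσdef, iterateFrobenius_def, ← hq]
  have hP0 : P.coeff 0 ≠ 0 := by
    rw [Polynomial.coeff_zero_eq_eval_zero, hP, Polynomial.eval_prod, Finset.prod_ne_zero_iff]
    intro i _
    simp only [Polynomial.eval_sub, Polynomial.eval_X, Polynomial.eval_C, zero_sub, neg_ne_zero]
    exact pow_ne_zero _ hβ0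
  have hg0 : g.coeff 0 ≠ 0 := by
    intro h0
    apply hP0
    rw [← hg, Polynomial.coeff_map, h0, _root_.map_zero]
  have hσg0 : σ (g.coeff 0) ≠ 0 := fun h => hg0 (σ.injective (by rw [h, _root_.map_zero]))
  have hh10 : (g.map σ).coeff 0 = σ (g.coeff 0) := Polynomial.coeff_map σ 0
  have hh1ne0 : (g.map σ).coeff 0 ≠ 0 := by rw [hh10]; exact hσg0
  have htzero : (g.map σ).natTrailingDegree = 0 :=
    Polynomial.natTrailingDegree_eq_zero.mpr (Or.inr hh1ne0)
  have htrail : (g.map σ).trailingCoeff = σ (g.coeff 0) := by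
    rw [Polynomial.trailingCoeff, htzero, hh10]
  have hh1deg : (g.map σ).natDegree = n := by rw [Polynomial.natDegree_map, hgdeg]
  have hTdef : tildePoly σ g = Polynomial.C ((σ (g.coeff 0))⁻¹) * (g.map σ).reverse := rfl
  have hTmonic : (tildePoly σ g).Monic := by
    show (tildePoly σ g).leadingCoeff = 1
    rw [hTdef, Polynomial.leadingCoeff_mul, Polynomial.leadingCoeff_C,
      Polynomial.reverse_leadingCoeff, htrail, inv_mul_cancel₀ hσg0]
  have hTdeg : (tildePoly σ g).natDegree = n := by
    rw [hTdef, Polynomial.natDegree_C_mul (inv_ne_zero hσg0), Polynomial.reverse_natDegree,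
      hh1deg, htzero]
    omega
  have hβinv : β ^ q ^ n = β⁻¹ := by
    have h7 : β ^ (q ^ n + 1) = 1 := by
      apply orderOf_dvd_iff_pow_eq_one.mp
      rw [hβ]
      exact hediv
    have h8 : β ^ q ^ n * β = 1 := by rw [← pow_succ]; exact h7
    exact eq_inv_of_mul_eq_one_left h8
  haveI : Invertible (β⁻¹) := invertibleOfNonzero (inv_ne_zero hβ0)
  have haevalT : (Polynomial.aeval β) (tildePoly σ g) = 0 := by
    rw [hTdef, _root_.map_mul, Polynomial.aeval_C]
    apply mul_eq_zero_of_right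
    rw [Polynomial.aeval_def]
    have hβeq : β = ⅟(β⁻¹) := by rw [invOf_eq_inv, inv_inv]
    rw [hβeq, Polynomial.eval₂_reverse_eq_zero_iff, Polynomial.eval₂_eq_eval_map]
    set ψk := iterateFrobenius (AlgebraicClosure (GaloisField p (2 * k))) p k with hψk
    have hψkx : ∀ x : (AlgebraicClosure (GaloisField p (2 * k))), ψk x = x ^ q := fun x => by rw [hψk, iterateFrobenius_def, ← hq]
    have hcomm : (g.map σ).map emb = P.map ψk := by
      rw [Polynomial.map_map, ← hg, Polynomial.map_map]
      congr 1
      ext a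
      simp only [RingHom.coe_comp, Function.comp_apply]
      rw [hσ, _root_.map_pow, hψkx]
    rw [hcomm, hP, Polynomial.map_prod, Polynomial.eval_prod]
    apply Finset.prod_eq_zero (Finset.mem_range.mpr (show m < n by omega))
    rw [Polynomial.map_sub, Polynomial.map_X, Polynomial.map_C, hψkx, ← pow_mul,
      Polynomial.eval_sub, Polynomial.eval_X, Polynomial.eval_C]
    have hexp : Q ^ m * q = q ^ n := by
      rw [hQ, hq, ← pow_mul, ← pow_mul, ← pow_add]
      congr 1
      rw [hn]
      ring
    rw [hexp, hβinv, sub_self]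
  have hgdvdT : g ∣ tildePoly σ g := by
    have h10 := minpoly.dvd (GaloisField p (2 * k)) β haevalT
    rwa [hgeq] at h10
  have hTg : g = tildePoly σ g :=
    aux_monic_eq_of_dvd hgmonic hTmonic hgdvdT (by rw [hTdeg, hgdeg])
  exact ⟨g, by rw [hg]; exact hPgoal, hgmonic, hgirr, hgdeg, hTg.symm⟩
end
end
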